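/- arXiv:2106.14289 — 5 statements merged into one kernel-verified Lean document; each statement's English description precedes it below -/
import Mathlib

section
/- Let S, Σ ∈ ℝ^{d×d} be symmetric positive definite matrices, η > 0, and define S' = (I + η(Σ − S)) S (I + η(Σ − S)). Suppose σ₁(S) ≤ 2σ₁, σ_d(Σ) ≥ σ_d, and σ₁(Σ) ≤ σ₁. Let s = σ_d(S) and s' = σ_d(S'). Then for all β ∈ (0,1) and η ≤ β/(8σ₁), one has s' ≥ (1 + η(σ_d − s))² s − ((8+6β)/(1−β)) σ₁³ η². -/
/-!
With `A = 1 + η(Σ - S)` and `c = s(1 + 2η(σ_d - s))` it suffices to show `c ≤ A S A` in the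
Loewner order. Since `A S A = (A √S)(√S A)` has the same spectrum as `√S A² √S`, it is enough
that `c ≤ √S A² √S`. Expanding the square, `A² ≥ 1 + 2η(Σ - S) ≥ (1 + 2ησ_d) - 2ηS`, hence
`√S A² √S ≥ (1 + 2ησ_d) S - 2η S²`, whose eigenvalues `f(λ) = (1 + 2ησ_d)λ - 2ηλ²`,
`λ ∈ [s, 2σ₁]`, are all at least `f(s) = c` because `f` increases on `[s, 2σ₁]` when
`8ησ₁ ≤ β < 1`. Finally `(1 + η(σ_d - s))² s = c + η²(σ_d - s)² s` with
`(σ_d - s)² s ≤ 8σ₁³`.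
-/

open Matrix
open scoped MatrixOrder

section StarOrderedRing

variable {A : Type*} [Ring A] [StarRing A] [PartialOrder A] [StarOrderedRing A]

theorem one_add_two_mul_le_one_add_mul_self {D : A} (hD : IsSelfAdjoint D) :
    1 + 2 * D ≤ (1 + D) * (1 + D) := by
  have hDD : 0 ≤ D * D := by simpa [hD.star_eq] using star_mul_self_nonneg D
  calc 1 + 2 * D ≤ 1 + 2 * D + D * D := le_add_of_nonneg_right hDD
    _ = (1 + D) * (1 + D) := by noncomm_ring

theorem algebraMap_sub_smul_le_one_add_smul_mul_self [Algebra ℝ A] [StarModule ℝ A]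
    [PosSMulMono ℝ A] {T S : A} {σ η : ℝ} (hT : IsSelfAdjoint T) (hS : IsSelfAdjoint S)
    (hσ : algebraMap ℝ A σ ≤ T) (hη : 0 ≤ η) :
    algebraMap ℝ A (1 + 2 * η * σ) - (2 * η) • S ≤ (1 + η • (T - S)) * (1 + η • (T - S)) :=
  calc algebraMap ℝ A (1 + 2 * η * σ) - (2 * η) • S
      = 1 + (2 * η) • (algebraMap ℝ A σ - S) := by
        simp only [map_add, map_mul, map_one, Algebra.smul_def]; noncomm_ring
    _ ≤ 1 + (2 * η) • (T - S) := by gcongr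
    _ = 1 + 2 * (η • (T - S)) := by rw [mul_smul, two_smul, two_mul]
    _ ≤ (1 + η • (T - S)) * (1 + η • (T - S)) :=
      one_add_two_mul_le_one_add_mul_self ((IsSelfAdjoint.all η).smul (hT.sub hS))

end StarOrderedRing

namespace Matrix

variable {n : Type*} [Fintype n] [DecidableEq n]

theorem spectrum_mul_comm {K : Type*} [Field K] (A B : Matrix n n K) :
    spectrum K (A * B) = spectrum K (B * A) := by
  ext r
  simp only [mem_spectrum_iff_isRoot_charpoly, charpoly_mul_comm]

theorem IsHermitian.algebraMap_le_iff_le_eigenvalues {M : Matrix n n ℝ} (hM : M.IsHermitian)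
    {c : ℝ} : algebraMap ℝ _ c ≤ M ↔ ∀ i, c ≤ hM.eigenvalues i := by
  rw [algebraMap_le_iff_le_spectrum hM.isSelfAdjoint, hM.spectrum_real_eq_range_eigenvalues,
    Set.forall_mem_range]

theorem IsHermitian.algebraMap_le_smul_sub_smul_mul_self {S : Matrix n n ℝ} (hS : S.IsHermitian)
    {a b c : ℝ} (h : ∀ i, c ≤ a * hS.eigenvalues i - b * hS.eigenvalues i ^ 2) :
    algebraMap ℝ _ c ≤ a • S - b • (S * S) := by
  have hcfc : cfc (fun x : ℝ ↦ a * x - b * x ^ 2) S = a • S - b • (S * S) := by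
    rw [cfc_sub _ _ S, cfc_const_mul _ _ S, cfc_const_mul _ _ S, cfc_pow _ _ S, cfc_id' ℝ S, sq]
  rw [← hcfc, algebraMap_le_cfc_iff _ _ _ (ha := hS.isSelfAdjoint),
    hS.spectrum_real_eq_range_eigenvalues, Set.forall_mem_range]
  exact h

theorem smul_sub_smul_mul_self_le_sqrt_mul_mul {S B : Matrix n n ℝ} (hS : 0 ≤ S) {a b : ℝ}
    (h : algebraMap ℝ _ a - b • S ≤ B) : a • S - b • (S * S) ≤ CFC.sqrt S * B * CFC.sqrt S := by
  set R := CFC.sqrt S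
  have hR : star R = R := (CFC.sqrt_nonneg S).isSelfAdjoint.star_eq
  calc a • S - b • (S * S) = R * (algebraMap ℝ _ a - b • S) * R := by
        rw [← CFC.sqrt_mul_sqrt_self S hS, Algebra.algebraMap_eq_smul_one]; noncomm_ring
    _ ≤ R * B * R := by simpa only [hR] using star_left_conjugate_le_conjugate h R

/-- `A * S * A = (A * √S) * (√S * A)` has the same spectrum as `(√S * A) * (A * √S)`. -/
theorem IsHermitian.le_eigenvalues_of_algebraMap_le_sqrt_mul_mul {S A : Matrix n n ℝ}
    (hS : 0 ≤ S) (hASA : (A * S * A).IsHermitian) {c : ℝ}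
    (hc : algebraMap ℝ _ c ≤ CFC.sqrt S * (A * A) * CFC.sqrt S) (i : n) :
    c ≤ hASA.eigenvalues i := by
  set R := CFC.sqrt S
  have hspec : spectrum ℝ (A * S * A) = spectrum ℝ (R * (A * A) * R) := by
    rw [← CFC.sqrt_mul_sqrt_self S hS, show A * (R * R) * A = (A * R) * (R * A) by noncomm_ring,
      spectrum_mul_comm, show R * A * (A * R) = R * (A * A) * R by noncomm_ring]
  have hsa : IsSelfAdjoint (R * (A * A) * R) := by
    simpa using (IsSelfAdjoint.of_nonneg (sub_nonneg.2 hc)).add (.algebraMap _ (.all c))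
  exact (algebraMap_le_iff_le_spectrum hsa).1 hc _ (hspec ▸ hASA.eigenvalues_mem_spectrum_real i)

end Matrix

theorem mul_sub_mul_sq_le_of_le {a b s x : ℝ} (hsx : s ≤ x) (h : b * (x + s) ≤ a) :
    a * s - b * s ^ 2 ≤ a * x - b * x ^ 2 := by
  nlinarith [mul_nonneg (sub_nonneg.2 hsx) (sub_nonneg.2 h)]

theorem sub_sq_mul_le {σ₁ σ s : ℝ} (hσ : 0 ≤ σ) (hσσ₁ : σ ≤ σ₁) (hs : 0 ≤ s) (hsσ₁ : s ≤ 2 * σ₁) :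
    (σ - s) ^ 2 * s ≤ 8 * σ₁ ^ 3 := by
  have hsq : (σ - s) ^ 2 ≤ (2 * σ₁) ^ 2 := sq_le_sq' (by linarith) (by linarith)
  calc (σ - s) ^ 2 * s ≤ (2 * σ₁) ^ 2 * (2 * σ₁) := by gcongr
    _ = 8 * σ₁ ^ 3 := by ring

theorem stmt0_general {d : ℕ} [NeZero d] (S Sig : Matrix (Fin d) (Fin d) ℝ)
    (hS : S.PosDef) (hSig : Sig.PosDef)
    (σ1 σd : ℝ) (hσd : 0 < σd) (hσ1 : σd ≤ σ1)
    (η : ℝ) (hη0 : 0 < η)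
    (hSle : ∀ i, hS.1.eigenvalues i ≤ 2 * σ1)
    (hSigge : ∀ i, σd ≤ hSig.1.eigenvalues i)
    (hS'h : ((1 + η • (Sig - S)) * S * (1 + η • (Sig - S))).IsHermitian)
    (β : ℝ) (hβ : β ∈ Set.Ioo (0 : ℝ) 1) (hηβ : η ≤ β / (8 * σ1)) :
    (1 + η * (σd - ⨅ i, hS.1.eigenvalues i)) ^ 2 * (⨅ i, hS.1.eigenvalues i)
        - (8 + 6 * β) / (1 - β) * σ1 ^ 3 * η ^ 2
      ≤ ⨅ i, hS'h.eigenvalues i := by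
  obtain ⟨hβ0, hβ1⟩ := hβ
  have hσ1_pos : 0 < σ1 := hσd.trans_le hσ1
  have hησ1 : η * (8 * σ1) ≤ β := (le_div_iff₀ (by positivity)).1 hηβ
  set s := ⨅ i, hS.1.eigenvalues i
  obtain ⟨i₀, hi₀⟩ : ∃ i₀, hS.1.eigenvalues i₀ = s := exists_eq_ciInf_of_finite
  have hs_le : ∀ i, s ≤ hS.1.eigenvalues i := fun i ↦ ciInf_le (Finite.bddBelow_range _) i
  have hs_pos : 0 < s := hi₀ ▸ hS.eigenvalues_pos i₀
  have hs_le₂ : s ≤ 2 * σ1 := hi₀ ▸ hSle i₀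
  have hA_sq := algebraMap_sub_smul_le_one_add_smul_mul_self hSig.1.isSelfAdjoint
    hS.1.isSelfAdjoint (hSig.1.algebraMap_le_iff_le_eigenvalues.2 hSigge) hη0.le
  have hc := (hS.1.algebraMap_le_smul_sub_smul_mul_self fun i ↦ mul_sub_mul_sq_le_of_le (hs_le i)
    (by nlinarith [mul_le_mul_of_nonneg_left (hSle i) hη0.le,
      mul_le_mul_of_nonneg_left hs_le₂ hη0.le, mul_pos hη0 hσd])).trans
    (smul_sub_smul_mul_self_le_sqrt_mul_mul hS.posSemidef.nonneg hA_sq)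
  refine le_trans ?_ (le_ciInf (hS'h.le_eigenvalues_of_algebraMap_le_sqrt_mul_mul
    hS.posSemidef.nonneg hc))
  have hK : 8 ≤ (8 + 6 * β) / (1 - β) := by rw [le_div_iff₀ (by linarith)]; linarith
  nlinarith [sub_sq_mul_le hσd.le hσ1 hs_pos.le hs_le₂,
    mul_le_mul_of_nonneg_right hK (by positivity : 0 ≤ σ1 ^ 3 * η ^ 2)]

/-- Lemma on the one-step dynamics of the smallest eigenvalue of `S`:
if `S' = (I + η(Σ - S)) S (I + η(Σ - S))` with `S, Σ` positive definite,
`σ₁(S) ≤ 2σ₁`, `σ_d ≤ σ_d(Σ)`, `σ₁(Σ) ≤ σ₁`, then for `β ∈ (0,1)` and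
`η ≤ β/(8σ₁)` we have
`σ_d(S') ≥ (1 + η(σ_d - σ_d(S)))² σ_d(S) - (8+6β)/(1-β) σ₁³ η²`. -/
theorem stmt0 {d : ℕ} [NeZero d] (S Sig : Matrix (Fin d) (Fin d) ℝ)
    (hS : S.PosDef) (hSig : Sig.PosDef)
    (σ1 σd : ℝ) (hσd : 0 < σd) (hσ1 : σd ≤ σ1)
    (η : ℝ) (hη0 : 0 < η)
    (hSle : ∀ i, hS.1.eigenvalues i ≤ 2 * σ1)
    (hSigge : ∀ i, σd ≤ hSig.1.eigenvalues i)
    (hSigle : ∀ i, hSig.1.eigenvalues i ≤ σ1)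
    (hS'h : ((1 + η • (Sig - S)) * S * (1 + η • (Sig - S))).IsHermitian)
    (β : ℝ) (hβ : β ∈ Set.Ioo (0 : ℝ) 1) (hηβ : η ≤ β / (8 * σ1)) :
    (1 + η * (σd - ⨅ i, hS.1.eigenvalues i)) ^ 2 * (⨅ i, hS.1.eigenvalues i)
        - (8 + 6 * β) / (1 - β) * σ1 ^ 3 * η ^ 2
      ≤ ⨅ i, hS'h.eigenvalues i :=
  stmt0_general S Sig hS hSig σ1 σd hσd hσ1 η hη0 hSle hSigge hS'h β hβ hηβ
end

section
/- Let P, Σ ∈ ℝ^{d×d} be symmetric matrices, η > 0, and define P' = (I − η(Σ − P)) P (I − η(Σ − P)). Suppose σ₁(P) ≤ 2σ₁ and σ_d I ⪯ Σ ⪯ σ₁ I. Let p = λ_d(P) and p' = λ_d(P'). Then for all β ∈ (0,1) and η ≤ β/(8σ₁): if p < 0 then p' ≥ (1 − ησ_d)² p − ((8+6β)/(1−β)) σ₁³ η², and if p ≥ 0 then p' ≥ 0. -/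
/-!
Write `Q = P - p • 1 ⪰ 0` and `B = P - Σ`, so that `P' = A P A = A Q A + p A²` with `A = 1 + η B`.
Dropping the nonnegative term `η² B Q B` gives `A Q A ⪰ Q + η (B Q + Q B)`, and
`B Q + Q B = 2 Q² + 2p Q - (Σ Q + Q Σ)`; the cross term is controlled by the Loewner AM-GM
inequality `Σ Q + Q Σ ⪯ t Q + t⁻¹ Σ Q Σ ⪯ t Q + 4σ₁³/t`. For `p < 0` the term `p A²` is bounded
below through `A² ⪯ 1 + 2η (Q + (p - σ_d)) + 9η²σ₁²`. With the weight `t = (1 - β)/η` the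
coefficient of `Q` in the resulting lower bound is `β + 4ηp ≥ 0`, so `P' ⪰ c • 1` for an explicit
scalar `c`, which dominates the claimed bound. Everything except the final translation into
eigenvalues holds in any star-ordered `ℝ`-algebra with a continuous functional calculus.
-/

open scoped MatrixOrder

lemma one_step_bound_le_weighted_bound {p η σ₁ σd β : ℝ} (hp : p ≤ 0) (hη : 0 < η)
    (hσ₁ : 0 ≤ σ₁) (hβ : β < 1) (hησ : 8 * η * σ₁ ≤ β) :
    (1 - η * σd) ^ 2 * p - (8 + 6 * β) / (1 - β) * σ₁ ^ 3 * η ^ 2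
      ≤ p * (1 + 2 * η * (p - σd) + 9 * η ^ 2 * σ₁ ^ 2) - η * (4 * σ₁ ^ 3 / ((1 - β) / η)) := by
  have h1β : 0 < 1 - β := sub_pos.mpr hβ
  have hση : 0 ≤ σ₁ ^ 3 * η ^ 2 := by positivity
  have hratio : 81 / 64 * β ≤ (4 + 6 * β) / (1 - β) := by
    rw [le_div_iff₀ h1β]; nlinarith [mul_nonneg hη.le hσ₁]
  -- `2ηp² + 9η²σ₁²p` is minimal at `p = -9ησ₁²/4`
  have hsq : -(81 / 64) * β * η ^ 2 * σ₁ ^ 3 ≤ 2 * η * p ^ 2 + 9 * η ^ 2 * σ₁ ^ 2 * p := by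
    nlinarith [mul_nonneg hη.le (sq_nonneg (4 * p + 9 * η * σ₁ ^ 2)),
      mul_le_mul_of_nonneg_left hησ (by positivity : (0 : ℝ) ≤ 81 / 64 * η ^ 2 * σ₁ ^ 2)]
  have e : η * (4 * σ₁ ^ 3 / ((1 - β) / η)) = 4 / (1 - β) * σ₁ ^ 3 * η ^ 2 := by
    field_simp
  have e' : (8 + 6 * β) / (1 - β) = 4 / (1 - β) + (4 + 6 * β) / (1 - β) := by
    field_simp; ring
  rw [e, e']
  nlinarith [mul_le_mul_of_nonneg_right hratio hση,
    mul_nonpos_of_nonneg_of_nonpos (sq_nonneg (η * σd)) hp]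

section StarOrderedAlgebra

variable {R : Type*} [Ring R] [StarRing R] [PartialOrder R] [StarOrderedRing R] [Algebra ℝ R]

lemma IsSelfAdjoint.mul_self_le_sq_smul_one [TopologicalSpace R]
    [ContinuousFunctionalCalculus ℝ R IsSelfAdjoint] [NonnegSpectrumClass ℝ R] {a : R}
    (ha : IsSelfAdjoint a) {c : ℝ} (h₁ : -(c • 1) ≤ a) (h₂ : a ≤ c • 1) :
    a * a ≤ c ^ 2 • 1 := by
  rw [← neg_smul, ← Algebra.algebraMap_eq_smul_one, algebraMap_le_iff_le_spectrum ha] at h₁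
  rw [← Algebra.algebraMap_eq_smul_one, le_algebraMap_iff_spectrum_le ha] at h₂
  rw [← Algebra.algebraMap_eq_smul_one, ← sq, ← cfc_pow_id (R := ℝ) a 2 ha,
    cfc_le_algebraMap_iff _ _ _ (by fun_prop) ha]
  exact fun x hx => sq_le_sq' (h₁ x hx) (h₂ x hx)

variable [StarModule ℝ R]

lemma IsSelfAdjoint.mul_add_mul_le {q s : R} (hq : 0 ≤ q) (hs : IsSelfAdjoint s) {t : ℝ}
    (ht : 0 < t) : s * q + q * s ≤ t • q + t⁻¹ • (s * q * s) := by
  have h : 0 ≤ (t • 1 - s) * q * (t • 1 - s) :=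
    (((IsSelfAdjoint.all t).smul (.one R)).sub hs).conjugate_nonneg hq
  have e : (t • 1 - s) * q * (t • 1 - s)
      = t • (t • q + t⁻¹ • (s * q * s) - (s * q + q * s)) := by
    simp only [sub_mul, mul_sub, smul_mul_assoc, mul_smul_comm, one_mul, mul_one, mul_assoc]
    match_scalars <;> field_simp
  rw [e] at h
  exact sub_nonneg.mp (nonneg_of_smul_nonneg_of_pos_left h ht)

lemma IsSelfAdjoint.mul_add_mul_le_smul_add_smul_one {q s : R} (hq : 0 ≤ q)
    (hs : IsSelfAdjoint s) {k m t : ℝ} (hk : 0 ≤ k) (hqk : q ≤ k • 1) (hsm : s * s ≤ m • 1)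
    (ht : 0 < t) : s * q + q * s ≤ t • q + (k * m / t) • 1 := by
  have hsqs : s * q * s ≤ (k * m) • 1 := calc
    s * q * s ≤ s * (k • 1) * s := hs.conjugate_le_conjugate hqk
    _ = k • (s * s) := by rw [mul_smul_comm, mul_one, smul_mul_assoc]
    _ ≤ k • (m • 1) := smul_le_smul_of_nonneg_left hsm hk
    _ = (k * m) • 1 := smul_smul k m 1
  calc s * q + q * s ≤ t • q + t⁻¹ • (s * q * s) := hs.mul_add_mul_le hq ht
    _ ≤ t • q + t⁻¹ • ((k * m) • 1) := by gcongr
    _ = t • q + (k * m / t) • 1 := by rw [smul_smul, inv_mul_eq_div]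

lemma add_smul_mul_add_mul_le_conj {q b : R} (hq : 0 ≤ q) (hb : IsSelfAdjoint b) (η : ℝ) :
    q + η • (b * q + q * b) ≤ (1 + η • b) * q * (1 + η • b) := by
  have h : 0 ≤ (η • b) * q * (η • b) := ((IsSelfAdjoint.all η).smul hb).conjugate_nonneg hq
  refine sub_nonneg.mp ?_
  convert h using 1
  simp only [add_mul, mul_add, smul_mul_assoc, mul_smul_comm, one_mul, mul_one, mul_assoc]
  module

lemma IsSelfAdjoint.smul_sub_smul_one_le_conj {P S : R} (hP : IsSelfAdjoint P)
    (hS : IsSelfAdjoint S) {p k m η t : ℝ} (hη : 0 ≤ η) (hk : 0 ≤ k) (ht : 0 < t)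
    (hpP : p • 1 ≤ P) (hPk : P - p • 1 ≤ k • 1) (hSm : S * S ≤ m • 1) :
    (P - p • 1) + η • ((2 * p - t) • (P - p • 1) - (k * m / t) • 1)
      ≤ (1 + η • (P - S)) * (P - p • 1) * (1 + η • (P - S)) := by
  set q := P - p • 1 with hq_def
  have hq : 0 ≤ q := sub_nonneg.mpr hpP
  have hanti : (2 * p - t) • q - (k * m / t) • 1 ≤ (P - S) * q + q * (P - S) := calc
    (2 * p - t) • q - (k * m / t) • 1 = 0 + (2 * p) • q - (t • q + (k * m / t) • 1) := by
      module
    _ ≤ (2 : ℝ) • (q * q) + (2 * p) • q - (S * q + q * S) := by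
      gcongr ?_ + _ - ?_
      · exact smul_nonneg zero_le_two hq.isSelfAdjoint.mul_self_nonneg
      · exact hS.mul_add_mul_le_smul_add_smul_one hq hk hPk hSm ht
    _ = (P - S) * q + q * (P - S) := by
      rw [hq_def]
      simp only [sub_mul, mul_sub, smul_mul_assoc, mul_smul_comm, one_mul, mul_one]
      module
  exact (add_le_add_right (smul_le_smul_of_nonneg_left hanti hη) q).trans
    (add_smul_mul_add_mul_le_conj hq (hP.sub hS) η)

variable [TopologicalSpace R] [ContinuousFunctionalCalculus ℝ R IsSelfAdjoint]
  [NonnegSpectrumClass ℝ R]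

lemma IsSelfAdjoint.one_add_smul_mul_self_le {b q : R} (hb : IsSelfAdjoint b) {r c η : ℝ}
    (hη : 0 ≤ η) (hbq : b ≤ q + r • 1) (h₁ : -(c • 1) ≤ b) (h₂ : b ≤ c • 1) :
    (1 + η • b) * (1 + η • b) ≤ (1 + 2 * η * r + η ^ 2 * c ^ 2) • 1 + (2 * η) • q := calc
  (1 + η • b) * (1 + η • b) = 1 + (2 * η) • b + η ^ 2 • (b * b) := by
    simp only [add_mul, mul_add, smul_mul_assoc, mul_smul_comm, one_mul, mul_one]
    module
  _ ≤ 1 + (2 * η) • (q + r • 1) + η ^ 2 • (c ^ 2 • 1) := by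
    gcongr
    exact hb.mul_self_le_sq_smul_one h₁ h₂
  _ = (1 + 2 * η * r + η ^ 2 * c ^ 2) • 1 + (2 * η) • q := by module

theorem IsSelfAdjoint.smul_one_le_conj_of_weight {P S : R} (hP : IsSelfAdjoint P)
    (hS : IsSelfAdjoint S) {p σ₁ σd η t : ℝ} (hσd : 0 < σd) (hσ : σd ≤ σ₁) (hη : 0 ≤ η)
    (ht : 0 < t) (hp : p ≤ 0) (hp₁ : -(2 * σ₁) ≤ p) (hcoef : 0 ≤ 1 + 4 * η * p - η * t)
    (hpP : p • 1 ≤ P) (hP₁ : P ≤ (2 * σ₁) • 1) (hSd : σd • 1 ≤ S) (hS₁ : S ≤ σ₁ • 1) :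
    (p * (1 + 2 * η * (p - σd) + 9 * η ^ 2 * σ₁ ^ 2) - η * (4 * σ₁ ^ 3 / t)) • 1
      ≤ (1 - η • (S - P)) * P * (1 - η • (S - P)) := by
  have hPk : P - p • 1 ≤ (4 * σ₁) • 1 := calc
    P - p • 1 ≤ (2 * σ₁) • 1 - p • 1 := sub_le_sub_right hP₁ _
    _ = (2 * σ₁ - p) • 1 := (sub_smul ..).symm
    _ ≤ (4 * σ₁) • 1 := smul_le_smul_of_nonneg_right (by linarith) zero_le_one
  have hSS : S * S ≤ σ₁ ^ 2 • 1 := by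
    refine hS.mul_self_le_sq_smul_one (le_trans ?_ hSd) hS₁
    rw [← neg_smul]
    exact smul_le_smul_of_nonneg_right (by linarith) zero_le_one
  have hAQA := hP.smul_sub_smul_one_le_conj hS hη (by linarith) ht hpP hPk hSS
  have hb_le : P - S ≤ (P - p • 1) + (p - σd) • 1 := calc
    P - S ≤ P - σd • 1 := sub_le_sub_left hSd P
    _ = (P - p • 1) + (p - σd) • 1 := by module
  have hb₁ : -((3 * σ₁) • 1) ≤ P - S := calc
    -((3 * σ₁) • 1) ≤ (p - σ₁) • (1 : R) := by
      rw [← neg_smul]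
      exact smul_le_smul_of_nonneg_right (by linarith) zero_le_one
    _ = p • 1 - σ₁ • 1 := sub_smul ..
    _ ≤ P - S := sub_le_sub hpP hS₁
  have hb₂ : P - S ≤ (3 * σ₁) • 1 := calc
    P - S ≤ (2 * σ₁) • 1 - σd • 1 := sub_le_sub hP₁ hSd
    _ = (2 * σ₁ - σd) • 1 := (sub_smul ..).symm
    _ ≤ (3 * σ₁) • 1 := smul_le_smul_of_nonneg_right (by linarith) zero_le_one
  have hAA := (hP.sub hS).one_add_smul_mul_self_le hη hb_le hb₁ hb₂
  calc (p * (1 + 2 * η * (p - σd) + 9 * η ^ 2 * σ₁ ^ 2) - η * (4 * σ₁ ^ 3 / t)) • 1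
      ≤ (1 + 4 * η * p - η * t) • (P - p • 1)
          + (p * (1 + 2 * η * (p - σd) + 9 * η ^ 2 * σ₁ ^ 2) - η * (4 * σ₁ ^ 3 / t)) • 1 :=
        le_add_of_nonneg_left (smul_nonneg hcoef (sub_nonneg.mpr hpP))
    _ = ((P - p • 1) + η • ((2 * p - t) • (P - p • 1) - (4 * σ₁ * σ₁ ^ 2 / t) • 1))
          + p • ((1 + 2 * η * (p - σd) + η ^ 2 * (3 * σ₁) ^ 2) • 1 + (2 * η) • (P - p • 1)) := by
        module
    _ ≤ (1 + η • (P - S)) * (P - p • 1) * (1 + η • (P - S))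
          + p • ((1 + η • (P - S)) * (1 + η • (P - S))) :=
        add_le_add hAQA (smul_le_smul_of_nonpos_left hAA hp)
    _ = (1 - η • (S - P)) * P * (1 - η • (S - P)) := by
      simp only [add_mul, mul_add, sub_mul, mul_sub, smul_mul_assoc, mul_smul_comm, one_mul,
        mul_one]
      module

theorem IsSelfAdjoint.smul_one_le_conj {P S : R} (hP : IsSelfAdjoint P) (hS : IsSelfAdjoint S)
    {p σ₁ σd η β : ℝ} (hσd : 0 < σd) (hσ : σd ≤ σ₁) (hη : 0 < η) (hβ : β < 1)
    (hησ : 8 * η * σ₁ ≤ β) (hp : p ≤ 0) (hp₁ : -(2 * σ₁) ≤ p) (hpP : p • 1 ≤ P)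
    (hP₁ : P ≤ (2 * σ₁) • 1) (hSd : σd • 1 ≤ S) (hS₁ : S ≤ σ₁ • 1) :
    ((1 - η * σd) ^ 2 * p - (8 + 6 * β) / (1 - β) * σ₁ ^ 3 * η ^ 2) • 1
      ≤ (1 - η • (S - P)) * P * (1 - η • (S - P)) := by
  have hcoef : 0 ≤ 1 + 4 * η * p - η * ((1 - β) / η) := by
    rw [mul_div_cancel₀ _ hη.ne']
    nlinarith [mul_le_mul_of_nonneg_left hp₁ (by positivity : (0 : ℝ) ≤ 4 * η)]
  have hbound := one_step_bound_le_weighted_bound (σd := σd) hp hη (hσd.le.trans hσ) hβ hησ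
  exact (smul_le_smul_of_nonneg_right hbound zero_le_one).trans
    (hP.smul_one_le_conj_of_weight hS hσd hσ hη.le (div_pos (sub_pos.mpr hβ) hη) hp hp₁ hcoef
      hpP hP₁ hSd hS₁)

end StarOrderedAlgebra

namespace Matrix.IsHermitian

variable {𝕜 n : Type*} [RCLike 𝕜] [Fintype n] [DecidableEq n] {N : Matrix n n 𝕜}

lemma smul_one_le_iff (hN : N.IsHermitian) {c : ℝ} : c • 1 ≤ N ↔ ∀ i, c ≤ hN.eigenvalues i := by
  rw [← Algebra.algebraMap_eq_smul_one, algebraMap_le_iff_le_spectrum hN.isSelfAdjoint,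
    hN.spectrum_real_eq_range_eigenvalues, Set.forall_mem_range]

lemma le_smul_one_iff (hN : N.IsHermitian) {c : ℝ} : N ≤ c • 1 ↔ ∀ i, hN.eigenvalues i ≤ c := by
  rw [← Algebra.algebraMap_eq_smul_one, le_algebraMap_iff_spectrum_le hN.isSelfAdjoint,
    hN.spectrum_real_eq_range_eigenvalues, Set.forall_mem_range]

lemma le_iInf_eigenvalues_iff [Nonempty n] (hN : N.IsHermitian) {c : ℝ} :
    c ≤ ⨅ i, hN.eigenvalues i ↔ c • 1 ≤ N := by
  rw [le_ciInf_iff (Set.finite_range _).bddBelow, hN.smul_one_le_iff]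

end Matrix.IsHermitian

/-- Lemma on the one-step dynamics of the smallest eigenvalue of `P`:
if `P' = (I - η(Σ - P)) P (I - η(Σ - P))` with `P, Σ` symmetric,
`σ₁(P) ≤ 2σ₁`, `σ_d I ⪯ Σ ⪯ σ₁ I`, then for `β ∈ (0,1)` and `η ≤ β/(8σ₁)`:
if `λ_d(P) < 0` then `λ_d(P') ≥ (1 - ησ_d)² λ_d(P) - (8+6β)/(1-β) σ₁³ η²`,
and if `λ_d(P) ≥ 0` then `λ_d(P') ≥ 0`. -/
theorem stmt1 {d : ℕ} [NeZero d] (P Sig : Matrix (Fin d) (Fin d) ℝ)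
    (hP : P.IsHermitian) (hSig : Sig.IsHermitian)
    (σ1 σd : ℝ) (hσd : 0 < σd) (hσ1 : σd ≤ σ1)
    (η : ℝ) (hη0 : 0 < η)
    (hPle : ∀ i, |hP.eigenvalues i| ≤ 2 * σ1)
    (hSigge : (Sig - σd • (1 : Matrix (Fin d) (Fin d) ℝ)).PosSemidef)
    (hSigle : (σ1 • (1 : Matrix (Fin d) (Fin d) ℝ) - Sig).PosSemidef)
    (hP'h : ((1 - η • (Sig - P)) * P * (1 - η • (Sig - P))).IsHermitian)
    (β : ℝ) (hβ : β ∈ Set.Ioo (0 : ℝ) 1) (hηβ : η ≤ β / (8 * σ1)) :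
    ((⨅ i, hP.eigenvalues i) < 0 →
      (1 - η * σd) ^ 2 * (⨅ i, hP.eigenvalues i)
          - (8 + 6 * β) / (1 - β) * σ1 ^ 3 * η ^ 2
        ≤ ⨅ i, hP'h.eigenvalues i) ∧
    (0 ≤ (⨅ i, hP.eigenvalues i) → 0 ≤ ⨅ i, hP'h.eigenvalues i) := by
  have hησ : 8 * η * σ1 ≤ β := by
    have := (le_div_iff₀ (by linarith : (0 : ℝ) < 8 * σ1)).mp hηβ
    linarith
  have hpP : (⨅ i, hP.eigenvalues i) • 1 ≤ P := hP.le_iInf_eigenvalues_iff.mp le_rfl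
  have hP₁ : P ≤ (2 * σ1) • 1 := hP.le_smul_one_iff.mpr fun i => (abs_le.mp (hPle i)).2
  have hp₁ : -(2 * σ1) ≤ ⨅ i, hP.eigenvalues i := le_ciInf fun i => (abs_le.mp (hPle i)).1
  refine ⟨fun hp => hP'h.le_iInf_eigenvalues_iff.mpr ?_,
    fun hp => hP'h.le_iInf_eigenvalues_iff.mpr ?_⟩
  · exact hP.isSelfAdjoint.smul_one_le_conj hSig.isSelfAdjoint hσd hσ1 hη0 hβ.2 hησ hp.le hp₁
      hpP hP₁ hSigge hSigle
  · have hA : IsSelfAdjoint (1 - η • (Sig - P)) :=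
      (IsSelfAdjoint.one _).sub ((IsSelfAdjoint.all η).smul (hSig.sub hP))
    simpa using hA.conjugate_nonneg (by simpa using hP.le_iInf_eigenvalues_iff.mp hp)
end

section
/- Let S, P, E ∈ ℝ^{d×d} be positive definite matrices with Σ = S + P, and suppose E commutes with Σ. Then (E(S⁻¹ − Σ⁻¹)E + Σ⁻¹)⁻¹ + (E⁻¹(P⁻¹ − Σ⁻¹)E⁻¹ + Σ⁻¹)⁻¹ = Σ. -/
/-!
Write `Σ = S + P` and `K = P E + S E⁻¹`. Since `E` commutes with `Σ`, hence with `Σ⁻¹`, and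
`S⁻¹ - Σ⁻¹ = S⁻¹ P Σ⁻¹`, the two matrices being inverted factor as
`E (S⁻¹ - Σ⁻¹) E + Σ⁻¹ = E S⁻¹ K Σ⁻¹` and `E⁻¹ (P⁻¹ - Σ⁻¹) E⁻¹ + Σ⁻¹ = E⁻¹ P⁻¹ K Σ⁻¹`,
so the sum of their inverses is `Σ K⁻¹ (S E⁻¹ + P E) = Σ`. The matrix `K` is invertible because
the first factored matrix is positive definite: `S⁻¹ - Σ⁻¹ = (S + S P⁻¹ S)⁻¹` is positive definite.
-/

open Matrix

namespace Matrix

variable {n 𝕜 α : Type*} [Fintype n] [DecidableEq n]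

section CommRing

variable [CommRing α] {A B S P E : Matrix n n α}

theorem _root_.Commute.nonsing_inv_right (h : Commute A B) : Commute A B⁻¹ := by
  by_cases hB : IsUnit B
  · have := hB.invertible
    simpa only [invOf_eq_nonsing_inv] using h.invOf_right
  · rw [nonsing_inv_apply_not_isUnit _ ((isUnit_iff_isUnit_det B).not.mp hB)]
    exact Commute.zero_right A

theorem _root_.Commute.nonsing_inv_left (h : Commute A B) : Commute A⁻¹ B :=
  h.symm.nonsing_inv_right.symm

theorem inv_sub_inv_add (hS : IsUnit S) (hSP : IsUnit (S + P)) :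
    S⁻¹ - (S + P)⁻¹ = S⁻¹ * P * (S + P)⁻¹ := by
  rw [inv_sub_inv (iff_of_true hS hSP), add_sub_cancel_left]

theorem mul_inv_sub_inv_add_mul_add_inv (hS : IsUnit S) (hE : IsUnit E) (hSP : IsUnit (S + P))
    (hcomm : Commute E (S + P)) :
    E * (S⁻¹ - (S + P)⁻¹) * E + (S + P)⁻¹ = E * S⁻¹ * (P * E + S * E⁻¹) * (S + P)⁻¹ := by
  rw [inv_sub_inv_add hS hSP]
  simp only [Matrix.mul_add, Matrix.add_mul, Matrix.mul_assoc, hcomm.nonsing_inv_right.eq]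
  rw [nonsing_inv_mul_cancel_left _ _ ((isUnit_iff_isUnit_det S).mp hS),
    mul_nonsing_inv_cancel_left _ _ ((isUnit_iff_isUnit_det E).mp hE)]

end CommRing

section RCLike

open scoped ComplexOrder

variable [RCLike 𝕜] {S P E : Matrix n n 𝕜}

theorem PosDef.inv_sub_inv_add (hS : S.PosDef) (hP : P.PosDef) : (S⁻¹ - (S + P)⁻¹).PosDef := by
  have := hS.isUnit.invertible
  have := hP.isUnit.invertible
  have hsum : (S + P) * P⁻¹ * S = S + Sᴴ * P⁻¹ * S := by
    rw [hS.isHermitian.eq, Matrix.add_mul, Matrix.add_mul, mul_inv_of_invertible, Matrix.one_mul,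
      add_comm]
  have hinv : S⁻¹ - (S + P)⁻¹ = ((S + P) * P⁻¹ * S)⁻¹ := by
    rw [Matrix.inv_sub_inv_add hS.isUnit (hS.add hP).isUnit, Matrix.mul_inv_rev,
      Matrix.mul_inv_rev, inv_inv_of_invertible, Matrix.mul_assoc]
  rw [hinv, hsum]
  exact (hS.add_posSemidef (hP.inv.posSemidef.conjTranspose_mul_mul_same S)).inv

theorem PosDef.mul_inv_sub_inv_add_mul_add_inv (hS : S.PosDef) (hP : P.PosDef)
    (hE : E.IsHermitian) : (E * (S⁻¹ - (S + P)⁻¹) * E + (S + P)⁻¹).PosDef := by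
  have h := (hS.inv_sub_inv_add hP).posSemidef.conjTranspose_mul_mul_same E
  rw [hE.eq] at h
  exact PosDef.posSemidef_add h (hS.add hP).inv

end RCLike

end Matrix

/-- If `S, P, E` are positive definite `d×d` real matrices, `Σ = S + P`, and `E`
commutes with `Σ`, then
`(E(S⁻¹ - Σ⁻¹)E + Σ⁻¹)⁻¹ + (E⁻¹(P⁻¹ - Σ⁻¹)E⁻¹ + Σ⁻¹)⁻¹ = Σ`. -/
theorem stmt2 {d : ℕ} (S P E : Matrix (Fin d) (Fin d) ℝ)
    (hS : S.PosDef) (hP : P.PosDef) (hE : E.PosDef)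
    (hcomm : E * (S + P) = (S + P) * E) :
    (E * (S⁻¹ - (S + P)⁻¹) * E + (S + P)⁻¹)⁻¹
      + (E⁻¹ * (P⁻¹ - (S + P)⁻¹) * E⁻¹ + (S + P)⁻¹)⁻¹ = S + P := by
  have hSP := hS.add hP
  have := hSP.isUnit.invertible
  have := hE.isUnit.invertible
  have hA := mul_inv_sub_inv_add_mul_add_inv hS.isUnit hE.isUnit hSP.isUnit hcomm
  have hB : E⁻¹ * (P⁻¹ - (S + P)⁻¹) * E⁻¹ + (S + P)⁻¹
      = E⁻¹ * P⁻¹ * (P * E + S * E⁻¹) * (S + P)⁻¹ := by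
    have h := mul_inv_sub_inv_add_mul_add_inv (S := P) (P := S) hP.isUnit
      hE.inv.isUnit (add_comm S P ▸ hSP.isUnit)
      (add_comm S P ▸ Commute.nonsing_inv_left hcomm)
    rwa [add_comm P S, inv_inv_of_invertible, add_comm (S * E⁻¹)] at h
  have hK : IsUnit (P * E + S * E⁻¹).det := by
    have h := (hS.mul_inv_sub_inv_add_mul_add_inv hP hE.isHermitian).isUnit
    rw [hA, isUnit_iff_isUnit_det, det_mul, det_mul, det_mul] at h
    exact isUnit_of_mul_isUnit_right (isUnit_of_mul_isUnit_left h)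
  have := hS.isUnit.invertible
  have := hP.isUnit.invertible
  rw [hA, hB]
  simp only [Matrix.mul_inv_rev, inv_inv_of_invertible, Matrix.mul_assoc, ← Matrix.mul_add]
  rw [add_comm (S * E⁻¹), nonsing_inv_mul _ hK, Matrix.mul_one]
end

section
/- Let Σ be a symmetric positive definite d×d matrix and let S₀ be a symmetric positive definite matrix such that S₀⁻¹ − Σ⁻¹ is well-defined. Then the matrix-valued function S(t) = (e^{−tΣ}(S₀⁻¹ − Σ⁻¹)e^{−tΣ} + Σ⁻¹)⁻¹ satisfies the matrix ordinary differential equation S'(t) = (Σ − S(t))S(t) + S(t)(Σ − S(t)) with S(0) = S₀, for all t for which S(t) is defined. -/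
/-!
`S(t)` is the inverse of `M(t) = e^{-tΣ} (S₀⁻¹ - Σ⁻¹) e^{-tΣ} + Σ⁻¹`. Since `e^{-tΣ}` commutes
with `Σ`, `M` solves the linear Lyapunov equation `M' = -(Σ (M - Σ⁻¹) + (M - Σ⁻¹) Σ)`, and
`S' = -S M' S` turns this into the Riccati equation `S' = (Σ - S) S + S (Σ - S)`.
-/

open Matrix NormedSpace

attribute [local instance] Matrix.linftyOpNormedAddCommGroup Matrix.linftyOpNormedSpace
  Matrix.linftyOpNormedRing Matrix.linftyOpNormedAlgebra

theorem HasDerivAt.ringInverse {𝕜 R : Type*} [NontriviallyNormedField 𝕜] [NormedRing R]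
    [HasSummableGeomSeries R] [NormedAlgebra 𝕜 R] {f : 𝕜 → R} {f' : R} {x : 𝕜}
    (hf : HasDerivAt f f' x) (hx : IsUnit (f x)) :
    HasDerivAt (fun y => Ring.inverse (f y))
      (-(Ring.inverse (f x) * f' * Ring.inverse (f x))) x := by
  obtain ⟨u, hu⟩ := hx
  have hinv := hasFDerivAt_ringInverse (𝕜 := 𝕜) u
  rw [hu] at hinv
  simpa [← hu, Function.comp_def] using hinv.comp_hasDerivAt x hf

theorem hasDerivAt_exp_neg_smul_mul_mul_exp_neg_smul {𝕂 𝔸 : Type*} [RCLike 𝕂] [NormedRing 𝔸]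
    [NormedAlgebra 𝕂 𝔸] [CompleteSpace 𝔸] (a b : 𝔸) (t : 𝕂) :
    HasDerivAt (fun s : 𝕂 => exp ((-s) • a) * b * exp ((-s) • a))
      (-(a * (exp ((-t) • a) * b * exp ((-t) • a))
        + exp ((-t) • a) * b * exp ((-t) • a) * a)) t := by
  have hE : ∀ s : 𝕂, exp ((-s) • a) = exp (s • -a) := fun s => by rw [neg_smul, smul_neg]
  simp only [hE]
  exact (((hasDerivAt_exp_smul_const' (-a) t).mul_const b).mul
    (hasDerivAt_exp_smul_const (-a) t)).congr_deriv (by noncomm_ring)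

theorem neg_mul_lyapunov_mul_eq_riccati {R : Type*} [Ring R] {a b m s : R}
    (hab : a * b = 1) (hba : b * a = 1) (hms : m * s = 1) (hsm : s * m = 1) :
    -(s * -(a * (m - b) + (m - b) * a) * s) = (a - s) * s + s * (a - s) := by
  calc -(s * -(a * (m - b) + (m - b) * a) * s)
      = s * a * (m * s) - s * (a * b) * s + (s * m) * a * s - s * (b * a) * s := by noncomm_ring
    _ = (a - s) * s + s * (a - s) := by rw [hab, hba, hms, hsm]; noncomm_ring

/-- The curve `S(t) = (e^{-tΣ}(S₀⁻¹ - Σ⁻¹)e^{-tΣ} + Σ⁻¹)⁻¹` satisfies `S(0) = S₀`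
and the matrix ODE `S'(t) = (Σ - S(t))S(t) + S(t)(Σ - S(t))`, for all `t` at
which the matrix being inverted is invertible. -/
theorem stmt3 {d : ℕ} (Sig S₀ : Matrix (Fin d) (Fin d) ℝ)
    (hSig : Sig.PosDef) (hS₀ : S₀.PosDef)
    (S : ℝ → Matrix (Fin d) (Fin d) ℝ)
    (hSdef : ∀ t, S t =
      (exp (((-t : ℝ) • Sig)) * (S₀⁻¹ - Sig⁻¹) * exp (((-t : ℝ) • Sig)) + Sig⁻¹)⁻¹)
    (hinv : ∀ t,
      IsUnit (exp (((-t : ℝ) • Sig)) * (S₀⁻¹ - Sig⁻¹) * exp (((-t : ℝ) • Sig)) + Sig⁻¹)) :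
    S 0 = S₀ ∧ ∀ t, HasDerivAt S ((Sig - S t) * S t + S t * (Sig - S t)) t := by
  set M : ℝ → Matrix (Fin d) (Fin d) ℝ :=
    fun t => exp ((-t) • Sig) * (S₀⁻¹ - Sig⁻¹) * exp ((-t) • Sig) + Sig⁻¹ with hM
  have hSigDet : IsUnit Sig.det := hSig.det_pos.ne'.isUnit
  have hS_eq : S = fun t => Ring.inverse (M t) := funext fun t => by
    rw [hSdef, Matrix.nonsing_inv_eq_ringInverse]
  refine ⟨?_, fun t => ?_⟩
  · rw [hSdef, neg_zero, zero_smul, exp_zero, one_mul, mul_one, sub_add_cancel,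
      Matrix.nonsing_inv_nonsing_inv _ hS₀.det_pos.ne'.isUnit]
  · have hM' : HasDerivAt M (-(Sig * (M t - Sig⁻¹) + (M t - Sig⁻¹) * Sig)) t := by
      rw [hM, add_sub_cancel_right]
      exact (hasDerivAt_exp_neg_smul_mul_mul_exp_neg_smul Sig (S₀⁻¹ - Sig⁻¹) t).add_const Sig⁻¹
    rw [hS_eq, ← neg_mul_lyapunov_mul_eq_riccati (Matrix.mul_nonsing_inv _ hSigDet)
      (Matrix.nonsing_inv_mul _ hSigDet) (Ring.mul_inverse_cancel _ (hinv t))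
      (Ring.inverse_mul_cancel _ (hinv t))]
    exact hM'.ringInverse (hinv t)
end

section
/- Let (s_t)_{t≥0} be a sequence with 0 < s₀ and s_t ≤ σ_d/2 for t < T, satisfying s_{t+1} ≥ (1 + η(σ_d − s_t)) s_t for all t < T, with 0 < η σ_d < 1. Then for all T' ≤ T, s_{T'}/(σ_d − s_{T'}) ≥ (1 + ησ_d)^{T'} · s₀/(σ_d − s₀). Consequently, s_t reaches σ_d/2 within O((1/(ησ_d)) ln(σ_d/s₀)) iterations. -/
/-! The map `x ↦ x / (σ - x)` turns one step of the logistic-type growth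
`s' ≥ (1 + η (σ - s)) s` into multiplication by at least `1 + η σ`: the gap shrinks as
`σ - s' ≤ (1 - η s)(σ - s)`, and `(1 + η (σ - s)) / (1 - η s) ≥ 1 + η σ` because the
difference is `η² σ s / (1 - η s) ≥ 0`. Iterating gives the geometric lower bound. -/

lemma gap_le_of_growth_step {σ η a b : ℝ} (hstep : (1 + η * (σ - a)) * a ≤ b) :
    σ - b ≤ (1 - η * a) * (σ - a) := by
  linarith

lemma mul_ratio_le_ratio_of_growth_step {σ η a b : ℝ} (ha : 0 < a) (haσ : a < σ) (hb : 0 ≤ b) (hbσ : b < σ)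
    (hstep : (1 + η * (σ - a)) * a ≤ b) :
    (1 + η * σ) * (a / (σ - a)) ≤ b / (σ - b) := by
  have hgap := gap_le_of_growth_step hstep
  have hσa : 0 < σ - a := by linarith
  have hshrink : 0 < 1 - η * a := pos_of_mul_pos_left (by linarith) hσa.le
  calc (1 + η * σ) * (a / (σ - a))
      ≤ (1 + η * (σ - a)) * a / ((1 - η * a) * (σ - a)) := by
        rw [← mul_div_assoc, div_le_div_iff₀ hσa (by positivity)]
        nlinarith [mul_nonneg (mul_nonneg (sq_nonneg η) (mul_pos ha ha).le) hσa.le]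
    _ ≤ b / (σ - b) := div_le_div₀ hb hstep (by linarith) hgap

lemma pow_mul_le_of_mul_le_succ {q : ℝ} (hq : 0 ≤ q) {r : ℕ → ℝ} {T : ℕ}
    (hstep : ∀ n < T, q * r n ≤ r (n + 1)) : ∀ n ≤ T, q ^ n * r 0 ≤ r n := by
  intro n hn
  induction n with
  | zero => simp
  | succ n ih =>
    calc q ^ (n + 1) * r 0 = q * (q ^ n * r 0) := by ring
      _ ≤ q * r n := mul_le_mul_of_nonneg_left (ih (by omega)) hq
      _ ≤ r (n + 1) := hstep n hn

theorem stmt11_general (σd η : ℝ) (hη : 0 < η)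
    (T : ℕ) (s : ℕ → ℝ)
    (hrange : ∀ t ≤ T, 0 < s t ∧ s t < σd)
    (hrec : ∀ t < T, (1 + η * (σd - s t)) * s t ≤ s (t + 1)) :
    ∀ T' ≤ T, (1 + η * σd) ^ T' * (s 0 / (σd - s 0)) ≤ s T' / (σd - s T') := by
  obtain ⟨hs₀, hs₀σ⟩ := hrange 0 (Nat.zero_le T)
  have hσd : 0 < σd := hs₀.trans hs₀σ
  refine pow_mul_le_of_mul_le_succ (r := fun t ↦ s t / (σd - s t)) (by positivity) ?_
  intro t ht
  obtain ⟨hst, hstσ⟩ := hrange t ht.le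
  obtain ⟨hsucc, hsuccσ⟩ := hrange (t + 1) ht
  exact mul_ratio_le_ratio_of_growth_step hst hstσ hsucc.le hsuccσ (hrec t ht)

/-- If `0 < s₀`, all `s_t ∈ (0, σ_d)` for `t ≤ T`, `s_t ≤ σ_d/2` for `t < T`,
and `s_{t+1} ≥ (1 + η(σ_d - s_t))s_t` for `t < T`, with `0 < ησ_d < 1`, then
`s_{T'}/(σ_d - s_{T'}) ≥ (1 + ησ_d)^{T'} s₀/(σ_d - s₀)` for all `T' ≤ T`. -/
theorem stmt11 (σd η : ℝ) (hσd : 0 < σd) (hη : 0 < η) (hησ : η * σd < 1)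
    (T : ℕ) (s : ℕ → ℝ)
    (hrange : ∀ t ≤ T, 0 < s t ∧ s t < σd)
    (hhalf : ∀ t < T, s t ≤ σd / 2)
    (hrec : ∀ t < T, (1 + η * (σd - s t)) * s t ≤ s (t + 1)) :
    ∀ T' ≤ T, (1 + η * σd) ^ T' * (s 0 / (σd - s 0)) ≤ s T' / (σd - s T') :=
  stmt11_general σd η hη T s hrange hrec
end
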